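/- arXiv:1904.03071 — 3 statements merged into one kernel-verified Lean document; each statement's English description precedes it below -/
import Mathlib

section
/- Let A be a small preadditive category, let G = {G_a : a ∈ Ob(A)} be a linear Grothendieck topology on A, and set T^G := Gen{H_a/R : a ∈ Ob(A), R ∈ G_a} ⊆ Mod A. Then: (1) a right A-module T belongs to T^G if and only if Ker(φ) ∈ G_a for every a ∈ Ob(A) and every morphism φ : H_a → T; (2) T^G is a hereditary torsion class in Mod A. -/
/-!
By Yoneda an element `x ∈ M(a)` of an additive module is a map `H_a ⟶ M` whose kernel is the
annihilator of `x`; call `x` torsion when that kernel lies in `G_a`. Gluing makes each `G_a`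
closed upwards and under finite intersections, so torsion elements form a subgroup and are
preserved by morphisms. All elements of `H_a/R` with `R ∈ G_a` are torsion (annihilators are
pullbacks of `R`), and torsion passes to submodules, to quotients (`H_a` is projective) and
to coproducts (whose elements are finite sums from the summands); this gives
`T^G ⊆ {T | T torsion}`, and conversely a torsion module is the quotient of `⊕_φ H_a/Ker φ`.
For an extension `K ↪ X ↠ Q` of torsion modules and `φ : H_a ⟶ X`, gluing along
`Ker(p ∘ φ) ∈ G_a` works because on that sieve `φ` factors through `K`.
-/
open CategoryTheory CategoryTheory.Limits Opposite
noncomputable section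
universe u
variable (A : Type u) [SmallCategory A] [Preadditive A]

abbrev PMod := Aᵒᵖ ⥤ AddCommGrpCat.{u}

def Hrep (b : A) : PMod A where
  obj a := AddCommGrpCat.of (unop a ⟶ b)
  map f := AddCommGrpCat.ofHom (AddMonoidHom.mk' (fun g => f.unop ≫ g)
    (fun g h => Preadditive.comp_add _ _ _ _ _ _))
  map_id a := by ext g; simp
  map_comp f g := by
    ext h
    show (f ≫ g).unop ≫ h = g.unop ≫ f.unop ≫ h
    simp

def toH {a b : A} (γ : a ⟶ b) : ((Hrep A b).obj (op a)) := γ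

def Hmap {b b' : A} (r : b ⟶ b') : Hrep A b ⟶ Hrep A b' where
  app a := AddCommGrpCat.ofHom (AddMonoidHom.mk' (fun g => g ≫ r)
    (fun g h => Preadditive.add_comp _ _ _ _ _ _))
  naturality a a' f := by
    ext g
    show (f.unop ≫ g) ≫ r = f.unop ≫ g ≫ r
    exact Category.assoc _ _ _

def inSub {M : PMod A} (R : Subobject M) {a : A} (x : M.obj (op a)) : Prop :=
  ∃ y, R.arrow.app (op a) y = x


/-- A (linear) Grothendieck topology on `A`. -/
structure LinearGT : Type (u + 1) where
  sieves : ∀ a : A, Set (Subobject (Hrep A a))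
  id_mem : ∀ a : A, ⊤ ∈ sieves a
  pullback_mem : ∀ {a a' : A} (r : a' ⟶ a) (R : Subobject (Hrep A a)),
    R ∈ sieves a → (Subobject.pullback (Hmap A r)).obj R ∈ sieves a'
  glue : ∀ {a : A} (R S : Subobject (Hrep A a)), S ∈ sieves a →
    (∀ (a' : A) (r : a' ⟶ a), inSub A S (toH A r) →
      (Subobject.pullback (Hmap A r)).obj R ∈ sieves a') →
    R ∈ sieves a

def Gen (S : Set (PMod A)) : Set (PMod A) :=
  {M | ∃ (ι : Type u) (g : ι → PMod A), (∀ i, g i ∈ S) ∧ ∃ p : (∐ g) ⟶ M, Epi p}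

def TG (G : LinearGT A) : Set (PMod A) :=
  Gen A {M | ∃ (a : A) (R : Subobject (Hrep A a)), R ∈ G.sieves a ∧
    Nonempty (M ≅ cokernel R.arrow)}

/-- A hereditary torsion class: closed under quotients, extensions, coproducts and
submodules. -/
def IsHereditaryTorsionClass' (T : Set (PMod A)) : Prop :=
  (∀ (X Q : PMod A) (p : X ⟶ Q), Epi p → X ∈ T → Q ∈ T) ∧
  (∀ X : PMod A, X.Additive → ∀ (Q : PMod A) (p : X ⟶ Q), Epi p → Q ∈ T →
    kernel p ∈ T → X ∈ T) ∧
  (∀ (ι : Type u) (g : ι → PMod A), (∀ i, g i ∈ T) → (∐ g) ∈ T) ∧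
  (∀ (S X : PMod A) (f : S ⟶ X), Mono f → X ∈ T → S ∈ T)


namespace CategoryTheory

variable {C : Type*} [Category C]

lemma Subobject.pullback_eq_top_of_factors [HasPullbacks C] {X Y : C} {f : X ⟶ Y}
    {R : Subobject Y} (h : R.Factors f) : (Subobject.pullback f).obj R = ⊤ :=
  top_le_iff.mp <| Subobject.le_of_factors <|
    (pullback_factors_iff f R _).mpr (Subobject.factors_of_factors_right _ h)

lemma Abelian.kernelSubobject_cokernel_π [Abelian C] {X : C} (R : Subobject X) :
    kernelSubobject (cokernel.π R.arrow) = R :=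
  le_antisymm
    (Subobject.le_of_comm (Abelian.monoLift R.arrow _ (kernelSubobject_arrow_comp _))
      (Abelian.monoLift_comp _ _ _))
    (le_kernelSubobject _ _ (cokernel.condition _))

namespace Limits

lemma pullback_kernelSubobject [HasPullbacks C] [HasZeroMorphisms C] {X Y Z : C} (f : X ⟶ Y)
    (g : Y ⟶ Z) [HasKernel g] [HasKernel (f ≫ g)] :
    (Subobject.pullback f).obj (kernelSubobject g) = kernelSubobject (f ≫ g) := by
  apply le_antisymm <;> apply Subobject.le_of_factors
  · rw [kernelSubobject_factors_iff, ← Category.assoc, ← kernelSubobject_factors_iff,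
      ← pullback_factors_iff]
    exact Subobject.factors_self _
  · rw [pullback_factors_iff, kernelSubobject_factors_iff, Category.assoc,
      kernelSubobject_arrow_comp]

lemma arrow_comp_eq_zero_of_le_kernelSubobject [HasZeroMorphisms C] {X Y : C} {f : X ⟶ Y}
    [HasKernel f] {P : Subobject X} (h : P ≤ kernelSubobject f) : P.arrow ≫ f = 0 := by
  rw [← Subobject.ofLE_arrow h, Category.assoc, kernelSubobject_arrow_comp, comp_zero]

variable [Preadditive C] [HasKernels C]

lemma kernelSubobject_inf_le_add [HasPullbacks C] {X Y : C} (f g : X ⟶ Y) :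
    kernelSubobject f ⊓ kernelSubobject g ≤ kernelSubobject (f + g) :=
  le_kernelSubobject _ _ <| by
    rw [Preadditive.comp_add, arrow_comp_eq_zero_of_le_kernelSubobject inf_le_left,
      arrow_comp_eq_zero_of_le_kernelSubobject inf_le_right, add_zero]

lemma kernelSubobject_neg {X Y : C} (f : X ⟶ Y) :
    kernelSubobject (-f) = kernelSubobject f := by
  apply le_antisymm <;> apply le_kernelSubobject
  · simpa using kernelSubobject_arrow_comp (-f)
  · simp

end Limits

variable {D : Type*} [Category D] [Preadditive C] [Preadditive D]

lemma Functor.additive_of_epi {F G : C ⥤ D} [F.Additive] (p : F ⟶ G) [∀ X, Epi (p.app X)] :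
    G.Additive where
  map_add {X _ f g} := by
    rw [← cancel_epi (p.app X), Preadditive.comp_add, ← p.naturality, ← p.naturality,
      ← p.naturality, F.map_add, Preadditive.add_comp]

lemma Functor.additive_of_mono {F G : C ⥤ D} [G.Additive] (i : F ⟶ G) [∀ X, Mono (i.app X)] :
    F.Additive where
  map_add {_ Y f g} := by
    rw [← cancel_mono (i.app Y), Preadditive.add_comp, i.naturality, i.naturality,
      i.naturality, G.map_add, Preadditive.comp_add]

lemma Functor.additive_sigma {ι : Type*} (g : ι → C ⥤ D) [HasColimitsOfShape (Discrete ι) D]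
    [∀ i, (g i).Additive] : (∐ g).Additive where
  map_add {X _ f f'} :=
    (isColimitOfPreserves ((evaluation C D).obj X) (colimit.isColimit _)).hom_ext fun ⟨i⟩ => by
      change (Sigma.ι g i).app X ≫ _ = (Sigma.ι g i).app X ≫ _
      rw [Preadditive.comp_add, ← NatTrans.naturality, ← NatTrans.naturality,
        ← NatTrans.naturality, (g i).map_add, Preadditive.add_comp]

end CategoryTheory

lemma AddCommGrpCat.iSup_range_ι_eq_top {J : Type*} [Category J] {F : J ⥤ AddCommGrpCat.{u}}
    {c : Cocone F} (hc : IsColimit c) :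
    (⨆ j, (c.ι.app j).hom.range : AddSubgroup c.pt) = ⊤ := by
  set N : AddSubgroup c.pt := ⨆ j, (c.ι.app j).hom.range
  let q : c.pt ⟶ AddCommGrpCat.of (c.pt ⧸ N) := AddCommGrpCat.ofHom (QuotientAddGroup.mk' N)
  have hq : q = 0 := hc.hom_ext fun j => by
    ext z
    exact (QuotientAddGroup.eq_zero_iff _).mpr (AddSubgroup.mem_iSup_of_mem j ⟨z, rfl⟩)
  refine (AddSubgroup.eq_top_iff' N).mpr fun x => (QuotientAddGroup.eq_zero_iff x).mp ?_
  change q x = 0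
  rw [hq]
  rfl

section Yoneda
variable {A}

instance (a : A) : (Hrep A a).Additive where
  map_add {_ _ f g} := by
    ext (h : _ ⟶ a)
    exact Preadditive.add_comp _ _ _ f.unop g.unop h

lemma Hrep.hom_ext {T : PMod A} {a : A} {φ ψ : Hrep A a ⟶ T}
    (h : φ.app (op a) (toH A (𝟙 a)) = ψ.app (op a) (toH A (𝟙 a))) : φ = ψ := by
  ext b (s : unop b ⟶ a)
  have hφ := ConcreteCategory.congr_hom (φ.naturality s.op) (toH A (𝟙 a))
  have hψ := ConcreteCategory.congr_hom (ψ.naturality s.op) (toH A (𝟙 a))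
  have hs : (Hrep A a).map s.op (toH A (𝟙 a)) = s := Category.comp_id s
  simp only [ConcreteCategory.comp_apply, hs] at hφ hψ
  rw [hφ, hψ, h]

lemma Hrep.eq_Hmap {a b : A} (ψ : Hrep A b ⟶ Hrep A a) :
    ψ = Hmap A (ψ.app (op b) (toH A (𝟙 b))) :=
  Hrep.hom_ext (Category.id_comp _).symm

/-- The Yoneda correspondence: `x ∈ M(a)` gives `H_a ⟶ M`, `s ↦ x · s`. -/
def hrepHom {M : PMod A} [M.Additive] {a : A} (x : M.obj (op a)) : Hrep A a ⟶ M where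
  app b := AddCommGrpCat.ofHom (AddMonoidHom.mk' (fun s : unop b ⟶ a => M.map s.op x)
    (fun s t => by rw [op_add, M.map_add]; rfl))
  naturality b b' f := by
    ext (s : unop b ⟶ a)
    change M.map (f.unop ≫ s).op x = M.map f (M.map s.op x)
    rw [op_comp, M.map_comp]
    rfl

@[simp]
lemma hrepHom_app_id {M : PMod A} [M.Additive] {a : A} (x : M.obj (op a)) :
    (hrepHom x).app (op a) (toH A (𝟙 a)) = x :=
  ConcreteCategory.congr_hom (M.map_id (op a)) x

lemma epi_of_forall_exists_comp_eq {M T : PMod A} [T.Additive] (p : M ⟶ T)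
    (h : ∀ (a : A) (φ : Hrep A a ⟶ T), ∃ ψ : Hrep A a ⟶ M, ψ ≫ p = φ) : Epi p := by
  have (b : Aᵒᵖ) : Epi (p.app b) := (AddCommGrpCat.epi_iff_surjective _).mpr fun x => by
    obtain ⟨ψ, hψ⟩ := h b.unop (hrepHom x)
    exact ⟨ψ.app b (toH A (𝟙 b.unop)),
      (congr_arg (fun φ => φ.app b (toH A (𝟙 b.unop))) hψ).trans (hrepHom_app_id x)⟩
  exact NatTrans.epi_of_epi_app p

variable {M N : PMod A} [M.Additive]

lemma eq_hrepHom {a : A} (φ : Hrep A a ⟶ M) : φ = hrepHom (φ.app (op a) (toH A (𝟙 a))) :=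
  Hrep.hom_ext (hrepHom_app_id _).symm

lemma hrepHom_comp [N.Additive] {a : A} (x : M.obj (op a)) (q : M ⟶ N) :
    hrepHom x ≫ q = hrepHom (q.app (op a) x) :=
  Hrep.hom_ext (by simp)

lemma hrepHom_add {a : A} (x y : M.obj (op a)) : hrepHom (x + y) = hrepHom x + hrepHom y :=
  Hrep.hom_ext (by simp)

lemma hrepHom_toH {a b : A} (r : b ⟶ a) : hrepHom (toH A r) = Hmap A r :=
  Hrep.hom_ext ((hrepHom_app_id _).trans (Category.id_comp r).symm)

lemma factors_hrepHom_of_inSub {R : Subobject M} {a : A} {x : M.obj (op a)} (h : inSub A R x) :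
    R.Factors (hrepHom x) := by
  obtain ⟨y, rfl⟩ := h
  have : (R : PMod A).Additive := Functor.additive_of_mono R.arrow
  exact (Subobject.factors_iff _ _).mpr ⟨hrepHom (M := (R : PMod A)) y, hrepHom_comp y R.arrow⟩

lemma Hrep.exists_comp_eq_of_epi {T : PMod A} (p : M ⟶ T) [Epi p] {a : A}
    (φ : Hrep A a ⟶ T) : ∃ ψ : Hrep A a ⟶ M, ψ ≫ p = φ := by
  obtain ⟨y, hy⟩ := (AddCommGrpCat.epi_iff_surjective (p.app (op a))).mp inferInstance
    (φ.app (op a) (toH A (𝟙 a)))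
  exact ⟨hrepHom y, Hrep.hom_ext (by simpa using hy)⟩

end Yoneda

namespace LinearGT
variable {A} (G : LinearGT A)

lemma mem_of_pullback_mem {a : A} {R S : Subobject (Hrep A a)} (hS : S ∈ G.sieves a)
    (h : ∀ (a' : A) (r : a' ⟶ a), S.Factors (Hmap A r) →
      (Subobject.pullback (Hmap A r)).obj R ∈ G.sieves a') : R ∈ G.sieves a :=
  G.glue R S hS fun a' r hr => h a' r (hrepHom_toH r ▸ factors_hrepHom_of_inSub hr)

lemma mem_of_le {a : A} {R S : Subobject (Hrep A a)} (hSR : S ≤ R) (hS : S ∈ G.sieves a) :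
    R ∈ G.sieves a :=
  G.mem_of_pullback_mem hS fun a' _ hr => by
    rw [Subobject.pullback_eq_top_of_factors (Subobject.factors_of_le _ hSR hr)]
    exact G.id_mem a'

lemma inf_mem {a : A} {R S : Subobject (Hrep A a)} (hR : R ∈ G.sieves a) (hS : S ∈ G.sieves a) :
    R ⊓ S ∈ G.sieves a :=
  G.mem_of_pullback_mem hS fun _ r hr => by
    rw [Subobject.inf_pullback, Subobject.pullback_eq_top_of_factors hr, inf_top_eq]
    exact G.pullback_mem r R hR

/-- The condition of part (1); for additive `T` it says that every element of `T` is torsion. -/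
def IsTorsion (T : PMod A) : Prop :=
  ∀ (a : A) (φ : Hrep A a ⟶ T), kernelSubobject φ ∈ G.sieves a

def torsionHoms (M : PMod A) (a : A) : AddSubgroup (Hrep A a ⟶ M) where
  carrier := {φ | kernelSubobject φ ∈ G.sieves a}
  add_mem' hφ hψ := G.mem_of_le (kernelSubobject_inf_le_add _ _) (G.inf_mem hφ hψ)
  zero_mem' := by
    simp only [Set.mem_ofPred_eq, kernelSubobject_zero]
    exact G.id_mem a
  neg_mem' {φ} hφ := by rwa [Set.mem_ofPred_eq, kernelSubobject_neg]

def torsion (M : PMod A) [M.Additive] (a : A) : AddSubgroup (M.obj (op a)) :=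
  (G.torsionHoms M a).comap (AddMonoidHom.mk' hrepHom hrepHom_add)

variable {G}

lemma IsTorsion.of_epi {M T : PMod A} [M.Additive] (hM : G.IsTorsion M) (p : M ⟶ T) [Epi p] :
    G.IsTorsion T := fun a φ => by
  obtain ⟨ψ, rfl⟩ := Hrep.exists_comp_eq_of_epi p φ
  exact G.mem_of_le (kernelSubobject_comp_le ψ p) (hM a ψ)

lemma IsTorsion.of_mono {S X : PMod A} (hX : G.IsTorsion X) (f : S ⟶ X) [Mono f] :
    G.IsTorsion S := fun a φ => kernelSubobject_comp_mono φ f ▸ hX a (φ ≫ f)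

lemma IsTorsion.of_kernel {X Q : PMod A} (p : X ⟶ Q) (hQ : G.IsTorsion Q)
    (hK : G.IsTorsion (kernel p)) : G.IsTorsion X := fun a φ => by
  refine G.mem_of_pullback_mem (hQ a (φ ≫ p)) fun a' r hr => ?_
  rw [kernelSubobject_factors_iff, ← Category.assoc] at hr
  rw [pullback_kernelSubobject, ← kernel.lift_ι p _ hr, kernelSubobject_comp_mono]
  exact hK a' _

lemma isTorsion_cokernel {a : A} {R : Subobject (Hrep A a)} (hR : R ∈ G.sieves a) :
    G.IsTorsion (cokernel R.arrow) := fun b φ => by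
  obtain ⟨ψ, rfl⟩ := Hrep.exists_comp_eq_of_epi (cokernel.π R.arrow) φ
  rw [Hrep.eq_Hmap ψ, ← pullback_kernelSubobject, Abelian.kernelSubobject_cokernel_π]
  exact G.pullback_mem _ R hR

lemma isTorsion_sigma {ι : Type u} (g : ι → PMod A) [∀ i, (g i).Additive]
    (h : ∀ i, G.IsTorsion (g i)) : G.IsTorsion (∐ g) := fun b φ => by
  have := Functor.additive_sigma g
  suffices G.torsion (∐ g) b = ⊤ by
    rw [eq_hrepHom φ]
    exact this.ge (AddSubgroup.mem_top _)
  rw [eq_top_iff, ← AddCommGrpCat.iSup_range_ι_eq_top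
    (isColimitOfPreserves ((evaluation _ _).obj (op b)) (colimit.isColimit _)), iSup_le_iff]
  rintro ⟨i⟩ _ ⟨w, rfl⟩
  change kernelSubobject (hrepHom ((Sigma.ι g i).app (op b) w)) ∈ G.sieves b
  rw [← hrepHom_comp]
  exact G.mem_of_le (kernelSubobject_comp_le _ _) (h i b _)

lemma additive_and_isTorsion_of_mem_TG {T : PMod A} (hT : T ∈ TG A G) :
    T.Additive ∧ G.IsTorsion T := by
  obtain ⟨ι, g, hg, p, hp⟩ := hT
  choose a R hR e using hg
  have (i : ι) : (g i).Additive := by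
    have := Functor.additive_of_epi (cokernel.π (R i).arrow)
    exact Functor.additive_of_mono (e i).some.hom
  have := Functor.additive_sigma g
  exact ⟨Functor.additive_of_epi p,
    (isTorsion_sigma g fun i => (isTorsion_cokernel (hR i)).of_mono (e i).some.hom).of_epi p⟩

lemma mem_TG_of_isTorsion {T : PMod A} [T.Additive] (hT : G.IsTorsion T) : T ∈ TG A G := by
  let g (φ : Σ a : A, Hrep A a ⟶ T) : PMod A := cokernel (kernelSubobject φ.2).arrow
  let p : ∐ g ⟶ T := Sigma.desc fun φ => cokernel.desc _ φ.2 (kernelSubobject_arrow_comp φ.2)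
  refine ⟨_, g, fun φ => ⟨φ.1, _, hT φ.1 φ.2, ⟨Iso.refl _⟩⟩, p,
    epi_of_forall_exists_comp_eq p fun a φ => ⟨cokernel.π _ ≫ Sigma.ι g ⟨a, φ⟩, ?_⟩⟩
  simp [p]

lemma mem_TG_iff {T : PMod A} [T.Additive] : T ∈ TG A G ↔ G.IsTorsion T :=
  ⟨fun hT => (additive_and_isTorsion_of_mem_TG hT).2, mem_TG_of_isTorsion⟩

end LinearGT

theorem statement5 (G : LinearGT A) :
    (∀ T : PMod A, T.Additive →
      (T ∈ TG A G ↔ ∀ (a : A) (φ : Hrep A a ⟶ T), kernelSubobject φ ∈ G.sieves a)) ∧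
    IsHereditaryTorsionClass' A (TG A G) := by
  have additive {T : PMod A} (hT : T ∈ TG A G) := (LinearGT.additive_and_isTorsion_of_mem_TG hT).1
  have torsion {T : PMod A} (hT : T ∈ TG A G) := (LinearGT.additive_and_isTorsion_of_mem_TG hT).2
  refine ⟨fun T _ => LinearGT.mem_TG_iff, ?quotients, ?extensions, ?coproducts, ?subobjects⟩
  case quotients =>
    rintro X Q p hp ⟨ι, g, hg, q, hq⟩
    exact ⟨ι, g, hg, q ≫ p, epi_comp q p⟩
  case extensions =>
    intro X _ Q p _ hQ hK
    exact LinearGT.mem_TG_of_isTorsion ((torsion hQ).of_kernel p (torsion hK))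
  case coproducts =>
    intro ι g hg
    have (i : ι) := additive (hg i)
    have := Functor.additive_sigma g
    exact LinearGT.mem_TG_of_isTorsion (LinearGT.isTorsion_sigma g fun i => torsion (hg i))
  case subobjects =>
    intro S X f _ hX
    have := additive hX
    have := Functor.additive_of_mono f
    exact LinearGT.mem_TG_of_isTorsion ((torsion hX).of_mono f)
end
end

section
/- Let A be a small preadditive category and let I be an idempotent ideal of A. Then the class T_I := {T ∈ Mod A : T(α) = 0 for all α ∈ I(a,b) and all a,b ∈ Ob(A)} is a TTF class in Mod A, i.e. it is closed under products, coproducts, submodules, quotients and extensions. -/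
open CategoryTheory CategoryTheory.Limits Opposite
noncomputable section
universe u
variable (A : Type u) [SmallCategory A] [Preadditive A]

/-- A two-sided ideal of the preadditive category `A`. -/
structure CatIdeal : Type u where
  carrier : ∀ a b : A, AddSubgroup (a ⟶ b)
  comp_mem_left : ∀ {a b c : A} (f : a ⟶ b) (g : b ⟶ c), f ∈ carrier a b → f ≫ g ∈ carrier a c
  comp_mem_right : ∀ {a b c : A} (f : a ⟶ b) (g : b ⟶ c), g ∈ carrier b c → f ≫ g ∈ carrier a c

/-- The product of two ideals: finite sums of composites. -/
def idealMul (I J : CatIdeal A) : ∀ a b : A, AddSubgroup (a ⟶ b) := fun a b =>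
  AddSubgroup.closure
    {u | ∃ (c : A) (ψ : a ⟶ c) (φ : c ⟶ b), ψ ∈ J.carrier a c ∧ φ ∈ I.carrier c b ∧ u = ψ ≫ φ}

def CatIdeal.IsIdempotent (I : CatIdeal A) : Prop :=
  ∀ a b : A, idealMul A I I a b = I.carrier a b

def TI (I : CatIdeal A) : Set (PMod A) :=
  {M | M.Additive ∧ ∀ (a b : A) (α : a ⟶ b), α ∈ I.carrier a b → M.map α.op = 0}

/-!
Both conditions defining `TI A I`, additivity and `M.map α.op = 0` for `α ∈ I`, pass to `M` from
the targets of a jointly monic family `M ⟶ N i` and from the sources of a jointly epic family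
`N i ⟶ M`; this gives products, submodules, coproducts and quotients. For an extension `X` of `Q`
by `kernel p`, a composite `ψ ≫ φ` of two morphisms of `I` is killed by `X`: `X.map φ.op` is
annihilated by `p`, so it factors through `kernel p`, which kills `ψ`. Idempotence writes every
`α ∈ I` as a sum of such composites.
-/

section JointlyMono

variable {C D : Type*} [Category C] [Category D] [Preadditive D]
  {ι : Type*} {M : C ⥤ D} {N : ι → C ⥤ D}

theorem Functor.additive_of_jointly_mono [Preadditive C] (π : ∀ i, M ⟶ N i) [∀ i, (N i).Additive]
    (hπ : ∀ (X : C) {W : D} (u v : W ⟶ M.obj X),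
      (∀ i, u ≫ (π i).app X = v ≫ (π i).app X) → u = v) :
    M.Additive where
  map_add {X Y f g} := hπ Y _ _ fun i => by
    simp only [Preadditive.add_comp, NatTrans.naturality, Functor.map_add, Preadditive.comp_add]

theorem Functor.map_eq_zero_of_jointly_mono (π : ∀ i, M ⟶ N i)
    (hπ : ∀ (X : C) {W : D} (u v : W ⟶ M.obj X),
      (∀ i, u ≫ (π i).app X = v ≫ (π i).app X) → u = v)
    {X Y : C} {f : X ⟶ Y} (hf : ∀ i, (N i).map f = 0) : M.map f = 0 :=
  hπ Y _ _ fun i => by rw [NatTrans.naturality, hf, comp_zero, zero_comp]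

theorem Functor.additive_of_jointly_epi [Preadditive C] (π : ∀ i, N i ⟶ M) [∀ i, (N i).Additive]
    (hπ : ∀ (X : C) {W : D} (u v : M.obj X ⟶ W),
      (∀ i, (π i).app X ≫ u = (π i).app X ≫ v) → u = v) :
    M.Additive where
  map_add {X Y f g} := hπ X _ _ fun i => by
    simp only [Preadditive.comp_add, ← NatTrans.naturality, Functor.map_add, Preadditive.add_comp]

theorem Functor.map_eq_zero_of_jointly_epi (π : ∀ i, N i ⟶ M)
    (hπ : ∀ (X : C) {W : D} (u v : M.obj X ⟶ W),
      (∀ i, (π i).app X ≫ u = (π i).app X ≫ v) → u = v)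
    {X Y : C} {f : X ⟶ Y} (hf : ∀ i, (N i).map f = 0) : M.map f = 0 :=
  hπ X _ _ fun i => by rw [← NatTrans.naturality, hf, comp_zero, zero_comp]

end JointlyMono

section Kernel

variable {C D : Type*} [Category C] [Category D] [HasZeroMorphisms D]
  [HasLimitsOfShape WalkingParallelPair D]
  {X Q : C ⥤ D} (p : X ⟶ Q)

theorem exists_lift_app_kernel_ι (c : C) {W : D} (g : W ⟶ X.obj c) (hg : g ≫ p.app c = 0) :
    ∃ l : W ⟶ (kernel p).obj c, l ≫ (kernel.ι p).app c = g :=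
  let h := (KernelFork.isLimitMapConeEquiv _ _).1
    (isLimitOfPreserves ((evaluation C D).obj c) (kernelIsKernel p))
  ⟨_, (KernelFork.IsLimit.lift' h g hg).2⟩

theorem map_comp_eq_zero_of_kernel_map_eq_zero {b c e : C} {φ : b ⟶ c} {ψ : c ⟶ e}
    (hφ : Q.map φ = 0) (hψ : (kernel p).map ψ = 0) : X.map (φ ≫ ψ) = 0 := by
  obtain ⟨l, hl⟩ := exists_lift_app_kernel_ι p c (X.map φ) (by rw [p.naturality, hφ, comp_zero])
  rw [X.map_comp, ← hl, Category.assoc, ← (kernel.ι p).naturality, hψ, zero_comp, comp_zero]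

end Kernel

section TI

variable {A}

def annihilator (M : PMod A) [M.Additive] (a b : A) : AddSubgroup (a ⟶ b) :=
  (M.mapAddHom.comp (opHom a b)).ker

theorem mem_annihilator {M : PMod A} [M.Additive] {a b : A} {α : a ⟶ b} :
    α ∈ annihilator M a b ↔ M.map α.op = 0 :=
  Iff.rfl

theorem idealMul_le_annihilator {M : PMod A} [M.Additive] {I J : CatIdeal A} {a b : A}
    (h : ∀ (c : A) (ψ : a ⟶ c) (φ : c ⟶ b), ψ ∈ J.carrier a c → φ ∈ I.carrier c b →
      M.map (ψ ≫ φ).op = 0) :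
    idealMul A I J a b ≤ annihilator M a b :=
  (AddSubgroup.closure_le _).2 fun _ ⟨c, ψ, φ, hψ, hφ, hu⟩ => hu ▸ h c ψ φ hψ hφ

variable {I : CatIdeal A} {ι : Type*} {M : PMod A} {N : ι → PMod A}

theorem mem_TI_of_jointly_mono (π : ∀ i, M ⟶ N i)
    (hπ : ∀ (X : Aᵒᵖ) {W : AddCommGrpCat} (u v : W ⟶ M.obj X),
      (∀ i, u ≫ (π i).app X = v ≫ (π i).app X) → u = v)
    (hN : ∀ i, N i ∈ TI A I) : M ∈ TI A I :=
  have := fun i => (hN i).1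
  ⟨Functor.additive_of_jointly_mono π hπ, fun a b α hα =>
    Functor.map_eq_zero_of_jointly_mono π hπ fun i => (hN i).2 a b α hα⟩

theorem mem_TI_of_jointly_epi (π : ∀ i, N i ⟶ M)
    (hπ : ∀ (X : Aᵒᵖ) {W : AddCommGrpCat} (u v : M.obj X ⟶ W),
      (∀ i, (π i).app X ≫ u = (π i).app X ≫ v) → u = v)
    (hN : ∀ i, N i ∈ TI A I) : M ∈ TI A I :=
  have := fun i => (hN i).1
  ⟨Functor.additive_of_jointly_epi π hπ, fun a b α hα =>
    Functor.map_eq_zero_of_jointly_epi π hπ fun i => (hN i).2 a b α hα⟩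

theorem mem_TI_of_kernel_mem_TI (hI : I.IsIdempotent) {X Q : PMod A} [X.Additive] (p : X ⟶ Q)
    (hQ : Q ∈ TI A I) (hK : kernel p ∈ TI A I) : X ∈ TI A I := by
  refine ⟨inferInstance, fun a b α hα => mem_annihilator.1 ?_⟩
  rw [← hI] at hα
  exact idealMul_le_annihilator (fun c ψ φ hψ hφ =>
    map_comp_eq_zero_of_kernel_map_eq_zero p (hQ.2 c b φ hφ) (hK.2 a c ψ hψ)) hα

end TI

theorem statement10 (I : CatIdeal A) (hI : I.IsIdempotent) :
    -- closed under products
    (∀ (ι : Type u) (g : ι → PMod A), (∀ i, g i ∈ TI A I) → (∏ᶜ g) ∈ TI A I) ∧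
    -- closed under coproducts
    (∀ (ι : Type u) (g : ι → PMod A), (∀ i, g i ∈ TI A I) → (∐ g) ∈ TI A I) ∧
    -- closed under submodules
    (∀ (S X : PMod A) (f : S ⟶ X), Mono f → X ∈ TI A I → S ∈ TI A I) ∧
    -- closed under quotients
    (∀ (X Q : PMod A) (p : X ⟶ Q), Epi p → X ∈ TI A I → Q ∈ TI A I) ∧
    -- closed under extensions
    (∀ X : PMod A, X.Additive → ∀ (Q : PMod A) (p : X ⟶ Q), Epi p → Q ∈ TI A I →
      kernel p ∈ TI A I → X ∈ TI A I) := by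
  refine ⟨fun ι g hg => ?_, fun ι g hg => ?_, fun S X f hf hX => ?_, fun X Q p hp hX => ?_,
    fun X hX Q p _ hQ hK => mem_TI_of_kernel_mem_TI hI p hQ hK⟩
  · exact mem_TI_of_jointly_mono (Pi.π g) (fun _ _ _ _ h => limit_obj_ext fun j => h j.as) hg
  · exact mem_TI_of_jointly_epi (Sigma.ι g) (fun _ _ _ _ h => colimit_obj_ext fun j => h j.as) hg
  · exact mem_TI_of_jointly_mono (fun _ : Unit => f)
      (fun X _ _ _ h => (cancel_mono (f.app X)).1 (h ())) fun _ => hX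
  · exact mem_TI_of_jointly_epi (fun _ : Unit => p)
      (fun X _ _ _ h => (cancel_epi (p.app X)).1 (h ())) fun _ => hX
end
end

section
/- Let A be a small preadditive category, P a right A-module, and consider the assertions: (1) P is finitely generated projective; (2) P is isomorphic to εA for some idempotent endomorphism ε ∈ A(x,x), x ∈ Ob(A); (3) P is isomorphic to H_x for some x ∈ Ob(A). Then (3) ⇒ (2) ⇒ (1) always hold; (1) ⇒ (2) holds if A is additive; and (2) ⇒ (3) holds if A is idempotent complete. In particular all three assertions are equivalent when A is Cauchy complete. -/
open CategoryTheory CategoryTheory.Limits Opposite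
noncomputable section
universe u
variable (A : Type u) [SmallCategory A] [Preadditive A]

/-- `M` is a finitely generated module: an epimorphic image of a finite coproduct of
representables. -/
def IsFinitelyGenerated (M : PMod A) : Prop :=
  ∃ (n : ℕ) (g : Fin n → A) (p : (∐ fun i => Hrep A (g i)) ⟶ M), Epi p

/-- `P` is a projective module: `Hom_A(P, -)` preserves epimorphisms of modules. -/
def IsProjectiveMod (P : PMod A) : Prop :=
  ∀ ⦃X Y : PMod A⦄, X.Additive → Y.Additive → ∀ (e : X ⟶ Y), Epi e →
    ∀ f : P ⟶ Y, ∃ l : P ⟶ X, l ≫ e = f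

/-!
All four implications go through the notion of a retract of a representable. For an idempotent
`ε`, the image factorisation of `H_ε` exhibits `εA` as a retract of `H_x`; conversely, if
`P` is a retract of `H_x` via `i : P → H_x`, `r : H_x → P`, then by Yoneda `r ≫ i = H_ε` for an
idempotent `ε`, and `P ≅ εA`. Representables are projective by Yoneda and finitely generated,
so their retracts are too. In an additive category an epimorphism `∐ H_{g_i} → P` factors
through `H_{⊕ g_i}`, so a finitely generated projective is a quotient, hence a retract, of a
representable. Finally, a splitting `ε = r ≫ i` with `i ≫ r = 𝟙_y` makes `H_y` the image of
`H_ε`.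
-/

section

variable {C : Type*} [Category C]

def retractImageOfIdempotent {X : C} (f : X ⟶ X) [HasImage f] [Epi (factorThruImage f)]
    (hf : f ≫ f = f) : Retract (image f) X where
  i := image.ι f
  r := factorThruImage f
  retract := by
    refine (cancel_mono (image.ι f)).1 ((cancel_epi (factorThruImage f)).1 ?_)
    simpa only [Category.assoc, image.fac, image.fac_assoc, Category.id_comp] using hf

def CategoryTheory.Retract.imageIso {X Y : C} (h : Retract Y X) {f : X ⟶ X} [HasImage f]
    (hf : h.r ≫ h.i = f) : image f ≅ Y :=
  (IsImage.isoExt (StrongEpiMonoFactorisation.toMonoIsImage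
    { I := Y, m := h.i, e := h.r, fac := hf }) (Image.isImage f)).symm

end

section

variable {A}

lemma Hmap_id (x : A) : Hmap A (𝟙 x) = 𝟙 (Hrep A x) := by
  ext a g
  exact Category.comp_id g

lemma Hmap_comp {x y z : A} (r : x ⟶ y) (s : y ⟶ z) :
    Hmap A (r ≫ s) = Hmap A r ≫ Hmap A s := by
  ext a g
  exact (Category.assoc g r s).symm

lemma Hmap_zero (x y : A) : Hmap A (0 : x ⟶ y) = 0 := by
  ext a g
  exact comp_zero

lemma Hmap_injective {x y : A} : Function.Injective (Hmap A : (x ⟶ y) → _) := fun α β h => by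
  have h₁ : 𝟙 x ≫ α = 𝟙 x ≫ β :=
    ConcreteCategory.congr_hom (congrArg (fun η => η.app (op x)) h) (toH A (𝟙 x))
  simpa using h₁

lemma Hrep_additive (x : A) : (Hrep A x).Additive where
  map_add {_ _ f g} := by
    ext h
    exact Preadditive.add_comp _ _ _ f.unop g.unop h

lemma app_toH_eq_map {x : A} {M : PMod A} (η : Hrep A x ⟶ M) {a : A} (g : a ⟶ x) :
    η.app (op a) (toH A g) = M.map g.op (η.app (op x) (toH A (𝟙 x))) := by
  have h := ConcreteCategory.congr_hom (η.naturality g.op) (toH A (𝟙 x))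
  rwa [ConcreteCategory.comp_apply, show (Hrep A x).map g.op (toH A (𝟙 x)) = toH A g from
    Category.comp_id g] at h

lemma Hrep_hom_ext {x : A} {M : PMod A} {η η' : Hrep A x ⟶ M}
    (h : η.app (op x) (toH A (𝟙 x)) = η'.app (op x) (toH A (𝟙 x))) : η = η' := by
  ext a g
  exact (app_toH_eq_map η g).trans ((congrArg _ h).trans (app_toH_eq_map η' g).symm)

lemma eq_Hmap_app {x y : A} (η : Hrep A x ⟶ Hrep A y) :
    η = Hmap A (η.app (op x) (toH A (𝟙 x))) :=
  Hrep_hom_ext (Category.id_comp _).symm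

def homOfElement {X : PMod A} (hX : X.Additive) {x : A} (v : X.obj (op x)) : Hrep A x ⟶ X where
  app a := AddCommGrpCat.ofHom (AddMonoidHom.mk' (fun g => X.map (g : unop a ⟶ x).op v)
    (fun g h => by rw [show (g + h : unop a ⟶ x).op = g.op + h.op from rfl, hX.map_add]; rfl))
  naturality a a' f := by
    ext g
    exact ConcreteCategory.congr_hom (X.map_comp (g : unop a ⟶ x).op f) v

lemma homOfElement_app_id {X : PMod A} (hX : X.Additive) {x : A} (v : X.obj (op x)) :
    (homOfElement hX v).app (op x) (toH A (𝟙 x)) = v :=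
  ConcreteCategory.congr_hom (X.map_id (op x)) v

lemma isProjectiveMod_Hrep (x : A) : IsProjectiveMod A (Hrep A x) := by
  intro X Y hX _ e he f
  obtain ⟨v, hv⟩ := (AddCommGrpCat.epi_iff_surjective (e.app (op x))).1 inferInstance
    (f.app (op x) (toH A (𝟙 x)))
  refine ⟨homOfElement hX v, Hrep_hom_ext ?_⟩
  rw [NatTrans.comp_app, ConcreteCategory.comp_apply, homOfElement_app_id, hv]

lemma IsProjectiveMod.of_retract {P Q : PMod A} (h : Retract P Q) (hQ : IsProjectiveMod A Q) :
    IsProjectiveMod A P := by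
  intro X Y hX hY e he f
  obtain ⟨l, hl⟩ := hQ hX hY e he (h.r ≫ f)
  exact ⟨h.i ≫ l, by rw [Category.assoc, hl, h.retract_assoc]⟩

lemma isFinitelyGenerated_of_epi {x : A} {M : PMod A} (q : Hrep A x ⟶ M) [Epi q] :
    IsFinitelyGenerated A M := by
  refine ⟨1, fun _ => x, Sigma.desc fun _ => q, ?_⟩
  have : Epi (Sigma.ι (fun _ : Fin 1 => Hrep A x) 0 ≫ Sigma.desc fun _ => q) := by
    rwa [Sigma.ι_desc]
  exact epi_of_epi (Sigma.ι _ 0) _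

lemma exists_epi_Hrep_of_isFinitelyGenerated [HasFiniteBiproducts A] {M : PMod A}
    (hM : IsFinitelyGenerated A M) : ∃ (x : A) (q : Hrep A x ⟶ M), Epi q := by
  obtain ⟨n, g, p, hp⟩ := hM
  let q : Hrep A (⨁ g) ⟶ M :=
    ∑ i, Hmap A (biproduct.π g i) ≫ Sigma.ι (fun i => Hrep A (g i)) i ≫ p
  have hfac : Sigma.desc (fun i => Hmap A (biproduct.ι g i)) ≫ q = p := by
    refine Sigma.hom_ext _ _ fun i => ?_
    rw [Sigma.ι_desc_assoc, Preadditive.comp_sum, Finset.sum_eq_single i]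
    · rw [← Category.assoc, ← Hmap_comp, biproduct.ι_π_self, Hmap_id, Category.id_comp]
    · intro j _ hj
      rw [← Category.assoc, ← Hmap_comp, biproduct.ι_π_ne g (Ne.symm hj), Hmap_zero, zero_comp]
    · exact fun hi => (hi (Finset.mem_univ i)).elim
  rw [← hfac] at hp
  exact ⟨⨁ g, q, epi_of_epi (Sigma.desc fun i => Hmap A (biproduct.ι g i)) q⟩

lemma exists_idempotent_of_retract {P : PMod A} {x : A} (h : Retract P (Hrep A x)) :
    ∃ ε : x ⟶ x, ε ≫ ε = ε ∧ Nonempty (P ≅ image (Hmap A ε)) := by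
  set ε : x ⟶ x := (h.r ≫ h.i).app (op x) (toH A (𝟙 x))
  have hε : h.r ≫ h.i = Hmap A ε := eq_Hmap_app _
  refine ⟨ε, Hmap_injective ?_, ⟨(h.imageIso hε).symm⟩⟩
  rw [Hmap_comp, ← hε, Category.assoc, h.retract_assoc]

end

theorem statement11 (P : PMod A) (hP : P.Additive) :
    -- (3) ⇒ (2)
    ((∃ x : A, Nonempty (P ≅ Hrep A x)) →
      ∃ (x : A) (ε : x ⟶ x), ε ≫ ε = ε ∧ Nonempty (P ≅ image (Hmap A ε))) ∧
    -- (2) ⇒ (1)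
    ((∃ (x : A) (ε : x ⟶ x), ε ≫ ε = ε ∧ Nonempty (P ≅ image (Hmap A ε))) →
      IsFinitelyGenerated A P ∧ IsProjectiveMod A P) ∧
    -- (1) ⇒ (2) when `A` is additive
    (HasFiniteBiproducts A →
      IsFinitelyGenerated A P ∧ IsProjectiveMod A P →
      ∃ (x : A) (ε : x ⟶ x), ε ≫ ε = ε ∧ Nonempty (P ≅ image (Hmap A ε))) ∧
    -- (2) ⇒ (3) when `A` is idempotent complete
    (IsIdempotentComplete A →
      (∃ (x : A) (ε : x ⟶ x), ε ≫ ε = ε ∧ Nonempty (P ≅ image (Hmap A ε))) →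
      ∃ x : A, Nonempty (P ≅ Hrep A x)) := by
  refine ⟨?_, ?_, ?_, ?_⟩
  · rintro ⟨x, ⟨e⟩⟩
    exact ⟨x, exists_idempotent_of_retract (Retract.ofIso e)⟩
  · rintro ⟨x, ε, hε, ⟨e⟩⟩
    let h := (Retract.ofIso e).trans
      (retractImageOfIdempotent (Hmap A ε) (by rw [← Hmap_comp, hε]))
    exact ⟨isFinitelyGenerated_of_epi h.r, (isProjectiveMod_Hrep x).of_retract h⟩
  · intro _ ⟨hfg, hproj⟩
    obtain ⟨x, q, hq⟩ := exists_epi_Hrep_of_isFinitelyGenerated hfg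
    obtain ⟨l, hl⟩ := hproj (Hrep_additive x) hP q hq (𝟙 P)
    exact ⟨x, exists_idempotent_of_retract ⟨l, q, hl⟩⟩
  · rintro hA ⟨x, ε, hε, ⟨e⟩⟩
    obtain ⟨y, i, r, hir, hri⟩ := hA.idempotents_split x ε hε
    let h : Retract (Hrep A y) (Hrep A x) :=
      ⟨Hmap A i, Hmap A r, by rw [← Hmap_comp, hir, Hmap_id]⟩
    exact ⟨y, ⟨e ≪≫ h.imageIso (by rw [← Hmap_comp, hri])⟩⟩
end
end
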